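/- Let X be the genus 2 curve glued from Spec k[t³,t⁴,t⁵] and Spec k[s] via t = s⁻¹, with singular point p₀, and let p, q be any two smooth points of X defined by ideals (t−a), (t−b) with a, b nonzero. Then the generalized divisors p₀ + p and p₀ + q are linearly equivalent. Consequently dim|p₀ + p| ≥ 1. -/

import Mathlib

/-!
STATEMENT 17: Let X be the genus 2 curve glued from X₁ = Spec k[t³,t⁴,t⁵] and
X₂ = Spec k[s] via t = s⁻¹, with singular point p₀, and let p, q be smooth
points given by ideals (t-a), (t-b) with a, b ≠ 0.  Then the generalized
divisors p₀ + p and p₀ + q are linearly equivalent; consequently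
dim|p₀ + p| ≥ 1.

We record a subsheaf of K = k(t) by its modules of sections over the two
charts.  The ideal sheaf of p₀ + p has sections m·I_p = t³(t-a)k[t] over X₁,
spanned over O₁ by t³(t-a), t⁴(t-a), t⁵(t-a), and (s - a⁻¹)k[s] over X₂.
Linear equivalence means the two section modules are carried to each other by
multiplication by one nonzero rational function f.  dim|p₀+p| ≥ 1 is the
existence of two k-linearly independent elements of
H⁰(X, L(p₀+p)) = {f : f·(p₀+p-sections) ⊆ O on both charts}.
-/

open Submodule

variable (k : Type*) [Field k]

noncomputable abbrev le2T : RatFunc k := RatFunc.X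

noncomputable def le2O1 : Subalgebra k (RatFunc k) :=
  Algebra.adjoin k {le2T k ^ 3, le2T k ^ 4, le2T k ^ 5}

noncomputable def le2O2 : Subalgebra k (RatFunc k) :=
  Algebra.adjoin k {(le2T k)⁻¹}

/-- Sections of the ideal sheaf of p₀ + p over X₁, p the point t = a. -/
noncomputable def le2D1 (a : k) : Submodule (le2O1 k) (RatFunc k) :=
  Submodule.span (le2O1 k)
    {le2T k ^ 3 * (le2T k - algebraMap k (RatFunc k) a),
     le2T k ^ 4 * (le2T k - algebraMap k (RatFunc k) a),
     le2T k ^ 5 * (le2T k - algebraMap k (RatFunc k) a)}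

/-- Sections of the ideal sheaf of p₀ + p over X₂ (p₀ ∉ X₂): the ideal
(s - a⁻¹) of the point p in k[s]. -/
noncomputable def le2D2 (a : k) : Submodule (le2O2 k) (RatFunc k) :=
  Submodule.span (le2O2 k) {(le2T k)⁻¹ - algebraMap k (RatFunc k) a⁻¹}

/-! The equivalence is multiplication by `f = (t - b)/(t - a)`. Over the singular chart `m·I_p = t³(t - a)k[t]` is
spanned by `tⁿ(t - a)`, `n = 3, 4, 5`, which `f` sends to `tⁿ(t - b)`; over the smooth chart `f`
sends the generator `s - a⁻¹` of `I_p` to the unit multiple `(b/a)(s - b⁻¹)`. For the second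
claim, `1` and `1/(t - a)` both multiply the sections of `p₀ + p` into `O_X`, and they are
independent because `t` is not constant. -/

theorem RatFunc.X_ne_algebraMap {K : Type*} [Field K] (c : K) :
    (RatFunc.X : RatFunc K) ≠ algebraMap K (RatFunc K) c := by
  rw [← RatFunc.algebraMap_X, RatFunc.algebraMap_eq_C, ← RatFunc.algebraMap_C,
    (RatFunc.algebraMap_injective K).ne_iff]
  exact Polynomial.X_ne_C c

theorem RatFunc.X_sub_algebraMap_ne_zero {K : Type*} [Field K] (c : K) :
    (RatFunc.X : RatFunc K) - algebraMap K (RatFunc K) c ≠ 0 :=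
  sub_ne_zero.mpr (RatFunc.X_ne_algebraMap c)

theorem Subalgebra.mul_mem_of_mem_span {R L : Type*} [CommSemiring R] [CommSemiring L]
    [Algebra R L] {A : Subalgebra R L} {f : L} {S : Set L} (hS : ∀ s ∈ S, f * s ∈ A)
    {x : L} (hx : x ∈ Submodule.span A S) : f * x ∈ A := by
  induction hx using Submodule.span_induction with
  | mem s hs => exact hS s hs
  | zero => simp
  | add y z _ _ hy hz => simpa [mul_add] using A.add_mem hy hz
  | smul c y _ hy => simpa [Algebra.smul_def, mul_left_comm f] using A.mul_mem c.2 hy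

theorem Subalgebra.mem_of_mem_span {R L : Type*} [CommSemiring R] [CommSemiring L]
    [Algebra R L] {A : Subalgebra R L} {S : Set L} (hS : S ⊆ A) {x : L}
    (hx : x ∈ Submodule.span A S) : x ∈ A := by
  simpa using Subalgebra.mul_mem_of_mem_span (f := 1) (fun s hs => by simpa using hS hs) hx

variable {k}

theorem le2T_pow_mem_le2O1 {n : ℕ} (hn : 3 ≤ n) : le2T k ^ n ∈ le2O1 k := by
  induction n using Nat.strong_induction_on with
  | _ n ih =>
    rcases (by omega : n = 3 ∨ n = 4 ∨ n = 5 ∨ 6 ≤ n) with rfl | rfl | rfl | h6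
    iterate 3 exact Algebra.subset_adjoin (by simp)
    rw [show n = 3 + (n - 3) by omega, pow_add]
    exact mul_mem (ih 3 (by omega) le_rfl) (ih (n - 3) (by omega) (by omega))

theorem le2T_inv_mem_le2O2 : (le2T k)⁻¹ ∈ le2O2 k :=
  Algebra.subset_adjoin (Set.mem_singleton _)

theorem le2D1_map_mulLeft_div (a b : k) :
    (le2D1 k a).map (LinearMap.mulLeft (le2O1 k)
      ((le2T k - algebraMap k _ b) / (le2T k - algebraMap k _ a))) = le2D1 k b := by
  have hXa := RatFunc.X_sub_algebraMap_ne_zero a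
  have cancel : ∀ z : RatFunc k, (le2T k - algebraMap k _ b) / (le2T k - algebraMap k _ a) *
      (z * (le2T k - algebraMap k _ a)) = z * (le2T k - algebraMap k _ b) := fun z => by
    field_simp
  simp only [le2D1, Submodule.map_span, Set.image_insert_eq, Set.image_singleton,
    LinearMap.mulLeft_apply, cancel]

theorem le2D2_map_mulLeft_div {a b : k} (ha : a ≠ 0) (hb : b ≠ 0) :
    (le2D2 k a).map (LinearMap.mulLeft (le2O2 k)
      ((le2T k - algebraMap k _ b) / (le2T k - algebraMap k _ a))) = le2D2 k b := by
  have hXa := RatFunc.X_sub_algebraMap_ne_zero a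
  have hX : le2T k ≠ 0 := RatFunc.X_ne_zero
  have hCa : algebraMap k (RatFunc k) a ≠ 0 := by simpa using ha
  have hCb : algebraMap k (RatFunc k) b ≠ 0 := by simpa using hb
  -- `s - a⁻¹ = (a - t) / (a t)`, so the ratio moves the generator to `(b / a) (s - b⁻¹)`.
  have rescale : (le2T k - algebraMap k _ b) / (le2T k - algebraMap k _ a) *
      ((le2T k)⁻¹ - algebraMap k _ a⁻¹) =
      Units.mk0 (b / a) (div_ne_zero hb ha) • ((le2T k)⁻¹ - algebraMap k _ b⁻¹) := by
    rw [Units.smul_mk0, Algebra.smul_def, map_div₀, map_inv₀, map_inv₀]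
    field_simp
    ring
  rw [le2D2, le2D2, Submodule.map_span, Set.image_singleton, LinearMap.mulLeft_apply, rescale,
    Submodule.span_singleton_group_smul_eq]

theorem mem_le2O1_of_mem_le2D1 (a : k) {x : RatFunc k} (hx : x ∈ le2D1 k a) : x ∈ le2O1 k := by
  have gen : ∀ n, 3 ≤ n → le2T k ^ n * (le2T k - algebraMap k _ a) ∈ le2O1 k := by
    intro n hn
    rw [mul_sub, ← pow_succ, ← Algebra.commutes, ← Algebra.smul_def]
    exact sub_mem (le2T_pow_mem_le2O1 (by omega)) ((le2O1 k).smul_mem (le2T_pow_mem_le2O1 hn) a)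
  refine Subalgebra.mem_of_mem_span ?_ hx
  rintro s (rfl | rfl | rfl)
  exacts [gen 3 le_rfl, gen 4 (by omega), gen 5 (by omega)]

theorem inv_mul_mem_le2O1_of_mem_le2D1 (a : k) {x : RatFunc k} (hx : x ∈ le2D1 k a) :
    (le2T k - algebraMap k _ a)⁻¹ * x ∈ le2O1 k := by
  have hXa := RatFunc.X_sub_algebraMap_ne_zero a
  have gen : ∀ n, 3 ≤ n →
      (le2T k - algebraMap k _ a)⁻¹ * (le2T k ^ n * (le2T k - algebraMap k _ a)) ∈ le2O1 k :=
    fun n hn => by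
      rw [mul_left_comm, inv_mul_cancel₀ hXa, mul_one]
      exact le2T_pow_mem_le2O1 hn
  refine Subalgebra.mul_mem_of_mem_span ?_ hx
  rintro s (rfl | rfl | rfl)
  exacts [gen 3 le_rfl, gen 4 (by omega), gen 5 (by omega)]

theorem mem_le2O2_of_mem_le2D2 (a : k) {x : RatFunc k} (hx : x ∈ le2D2 k a) : x ∈ le2O2 k := by
  refine Subalgebra.mem_of_mem_span ?_ hx
  rintro s rfl
  exact sub_mem le2T_inv_mem_le2O2 (Subalgebra.algebraMap_mem _ _)

theorem inv_mul_mem_le2O2_of_mem_le2D2 {a : k} (ha : a ≠ 0) {x : RatFunc k}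
    (hx : x ∈ le2D2 k a) : (le2T k - algebraMap k _ a)⁻¹ * x ∈ le2O2 k := by
  have hXa := RatFunc.X_sub_algebraMap_ne_zero a
  have hX : le2T k ≠ 0 := RatFunc.X_ne_zero
  have hCa : algebraMap k (RatFunc k) a ≠ 0 := by simpa using ha
  refine Subalgebra.mul_mem_of_mem_span ?_ hx
  rintro s rfl
  have : (le2T k - algebraMap k _ a)⁻¹ * ((le2T k)⁻¹ - algebraMap k _ a⁻¹) =
      -a⁻¹ • (le2T k)⁻¹ := by
    rw [Algebra.smul_def, map_neg, map_inv₀]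
    field_simp
    ring
  rw [this]
  exact Subalgebra.smul_mem _ le2T_inv_mem_le2O2 _

theorem RatFunc.linearIndependent_one_inv_X_sub_algebraMap {K : Type*} [Field K] (a : K) :
    LinearIndependent K ![1, ((RatFunc.X : RatFunc K) - algebraMap K _ a)⁻¹] := by
  rw [LinearIndependent.pair_iff' one_ne_zero]
  intro c hc
  rw [Algebra.smul_def, mul_one, eq_comm, inv_eq_iff_eq_inv, ← map_inv₀, sub_eq_iff_eq_add,
    ← map_add] at hc
  exact RatFunc.X_ne_algebraMap _ hc

theorem singular_plus_smooth_points_linearly_equivalent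
    (a b : k) (ha : a ≠ 0) (hb : b ≠ 0) :
    -- p₀ + p and p₀ + q are linearly equivalent:
    (∃ f : RatFunc k, f ≠ 0 ∧
      (le2D1 k a).map (LinearMap.mulLeft (le2O1 k) f) = le2D1 k b ∧
      (le2D2 k a).map (LinearMap.mulLeft (le2O2 k) f) = le2D2 k b) ∧
    -- consequently dim |p₀ + p| ≥ 1: H⁰(X, L(p₀+p)) contains two
    -- k-linearly independent elements:
    (∃ f g : RatFunc k,
      (∀ x ∈ le2D1 k a, f * x ∈ le2O1 k) ∧ (∀ x ∈ le2D2 k a, f * x ∈ le2O2 k) ∧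
      (∀ x ∈ le2D1 k a, g * x ∈ le2O1 k) ∧ (∀ x ∈ le2D2 k a, g * x ∈ le2O2 k) ∧
      LinearIndependent k ![f, g]) := by
  have ratio_ne_zero : (le2T k - algebraMap k _ b) / (le2T k - algebraMap k _ a) ≠ 0 :=
    div_ne_zero (RatFunc.X_sub_algebraMap_ne_zero b) (RatFunc.X_sub_algebraMap_ne_zero a)
  refine ⟨⟨_, ratio_ne_zero, le2D1_map_mulLeft_div a b, le2D2_map_mulLeft_div ha hb⟩,
    1, (le2T k - algebraMap k _ a)⁻¹,
    fun x hx => by simpa using mem_le2O1_of_mem_le2D1 a hx,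
    fun x hx => by simpa using mem_le2O2_of_mem_le2D2 a hx,
    fun x hx => inv_mul_mem_le2O1_of_mem_le2D1 a hx,
    fun x hx => inv_mul_mem_le2O2_of_mem_le2D2 ha hx,
    RatFunc.linearIndependent_one_inv_X_sub_algebraMap a⟩
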